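/- (Jacobi's identity.) For every z ∈ ℍ, Θ₂(z)⁴ + Θ₄(z)⁴ = Θ₃(z)⁴. -/

import Mathlib

open Complex

/-- The Jacobi theta function `Θ₃(z) = ∑_{n∈ℤ} exp(iπn²z)`. -/
noncomputable def Theta3 (z : ℂ) : ℂ :=
  ∑' n : ℤ, Complex.exp ((Real.pi : ℂ) * Complex.I * (n : ℂ) ^ 2 * z)

/-- The Jacobi theta function `Θ₄(z) = ∑_{n∈ℤ} (-1)ⁿ exp(iπn²z)`. -/
noncomputable def Theta4 (z : ℂ) : ℂ :=
  ∑' n : ℤ, (-1 : ℂ) ^ n * Complex.exp ((Real.pi : ℂ) * Complex.I * (n : ℂ) ^ 2 * z)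

/-- The Jacobi theta function `Θ₂(z) = ∑_{n∈ℤ} exp(iπ(n+1/2)²z)`. -/
noncomputable def Theta2 (z : ℂ) : ℂ :=
  ∑' n : ℤ, Complex.exp ((Real.pi : ℂ) * Complex.I * ((n : ℂ) + 1/2) ^ 2 * z)

namespace Stmt14Aux

noncomputable def t3 (z : ℂ) (n : ℤ) : ℂ := Complex.exp ((Real.pi : ℂ) * Complex.I * (n : ℂ) ^ 2 * z)
noncomputable def t4 (z : ℂ) (n : ℤ) : ℂ := (-1 : ℂ) ^ n * t3 z n
noncomputable def t2 (z : ℂ) (n : ℤ) : ℂ :=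
  Complex.exp ((Real.pi : ℂ) * Complex.I * ((n : ℂ) + 1/2) ^ 2 * z)

lemma summable3 {w : ℂ} (hw : 0 < w.im) : Summable (t3 w) := by
  refine ((summable_jacobiTheta₂_term_iff 0 w).mpr hw).congr fun n => ?_
  simp [jacobiTheta₂_term, t3]

lemma summable4 {w : ℂ} (hw : 0 < w.im) : Summable (t4 w) := by
  refine ((summable_jacobiTheta₂_term_iff (1/2) w).mpr hw).congr fun n => ?_
  rw [jacobiTheta₂_term, Complex.exp_add, t4, t3]
  congr 1
  rw [show (2 : ℂ) * (Real.pi : ℂ) * Complex.I * (n : ℂ) * (1/2)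
      = (n : ℂ) * ((Real.pi : ℂ) * Complex.I) by ring,
    Complex.exp_int_mul, Complex.exp_pi_mul_I]

lemma summable2 {w : ℂ} (hw : 0 < w.im) : Summable (t2 w) := by
  refine (((summable_jacobiTheta₂_term_iff (w/2) w).mpr hw).mul_left
    (Complex.exp ((Real.pi : ℂ) * Complex.I * w / 4))).congr fun n => ?_
  rw [jacobiTheta₂_term, ← Complex.exp_add, t2]
  congr 1
  ring

lemma hasSum3 {w : ℂ} (hw : 0 < w.im) : HasSum (t3 w) (Theta3 w) := by
  rw [Theta3]; exact (summable3 hw).hasSum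

lemma hasSum4 {w : ℂ} (hw : 0 < w.im) : HasSum (t4 w) (Theta4 w) := by
  rw [Theta4]; exact (summable4 hw).hasSum

lemma hasSum2 {w : ℂ} (hw : 0 < w.im) : HasSum (t2 w) (Theta2 w) := by
  rw [Theta2]; exact (summable2 hw).hasSum

lemma neg_one_zpow_mul_even {m n : ℤ} (h : Even (m - n)) : ((-1 : ℂ)) ^ m * (-1) ^ n = 1 := by
  rw [← zpow_add₀ (by norm_num : (-1 : ℂ) ≠ 0)]
  refine Even.neg_one_zpow ?_
  obtain ⟨k, hk⟩ := h
  exact ⟨k + n, by omega⟩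

lemma neg_one_zpow_mul_odd {m n : ℤ} (h : Odd (m - n)) : ((-1 : ℂ)) ^ m * (-1) ^ n = -1 := by
  rw [← zpow_add₀ (by norm_num : (-1 : ℂ) ≠ 0)]
  refine Odd.neg_one_zpow ?_
  obtain ⟨k, hk⟩ := h
  exact ⟨k + n, by omega⟩

/-- the injection `(a,b) ↦ (a+b, a-b)`, with range `{p | Even (p.1 - p.2)}` -/
def g1 : ℤ × ℤ → ℤ × ℤ := fun p => (p.1 + p.2, p.1 - p.2)
/-- the injection `(a,b) ↦ (a+b+1, a-b)`, with range `{p | Odd (p.1 - p.2)}` -/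
def g2 : ℤ × ℤ → ℤ × ℤ := fun p => (p.1 + p.2 + 1, p.1 - p.2)
/-- the injection `(a,b) ↦ (a+b, a-b-1)`, with range `{p | Odd (p.1 - p.2)}` -/
def g4 : ℤ × ℤ → ℤ × ℤ := fun p => (p.1 + p.2, p.1 - p.2 - 1)

lemma g1_inj : Function.Injective g1 := by
  intro p q h
  simp only [g1, Prod.mk.injEq] at h
  exact Prod.ext (by omega) (by omega)

lemma g2_inj : Function.Injective g2 := by
  intro p q h
  simp only [g2, Prod.mk.injEq] at h
  exact Prod.ext (by omega) (by omega)

lemma g4_inj : Function.Injective g4 := by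
  intro p q h
  simp only [g4, Prod.mk.injEq] at h
  exact Prod.ext (by omega) (by omega)

lemma mem_range_g1 {p : ℤ × ℤ} (h : Even (p.1 - p.2)) : p ∈ Set.range g1 := by
  obtain ⟨k, hk⟩ := h
  exact ⟨(p.2 + k, k), Prod.ext (by simp only [g1]; omega) (by simp only [g1]; omega)⟩

lemma mem_range_g2 {p : ℤ × ℤ} (h : Odd (p.1 - p.2)) : p ∈ Set.range g2 := by
  obtain ⟨k, hk⟩ := h
  exact ⟨(p.2 + k, k), Prod.ext (by simp only [g2]; omega) (by simp only [g2]; omega)⟩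

lemma mem_range_g4 {p : ℤ × ℤ} (h : Odd (p.1 - p.2)) : p ∈ Set.range g4 := by
  obtain ⟨k, hk⟩ := h
  exact ⟨(p.2 + k + 1, k), Prod.ext (by simp only [g4]; omega) (by simp only [g4]; omega)⟩

section main

variable {z : ℂ} (hz : 0 < z.im)

lemma im2 (hz : 0 < z.im) : 0 < (2 * z).im := by
  rw [Complex.mul_im]
  norm_num
  linarith

include hz

lemma sum_prod3 : HasSum (fun p : ℤ × ℤ => t3 z p.1 * t3 z p.2) (Theta3 z * Theta3 z) :=
  (hasSum3 hz).mul (hasSum3 hz) (summable_mul_of_summable_norm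
    (summable_norm_iff.mpr (summable3 hz)) (summable_norm_iff.mpr (summable3 hz)))

lemma sum_prod4 : HasSum (fun p : ℤ × ℤ => t4 z p.1 * t4 z p.2) (Theta4 z * Theta4 z) :=
  (hasSum4 hz).mul (hasSum4 hz) (summable_mul_of_summable_norm
    (summable_norm_iff.mpr (summable4 hz)) (summable_norm_iff.mpr (summable4 hz)))

lemma sum_prod2 : HasSum (fun p : ℤ × ℤ => t2 z p.1 * t2 z p.2) (Theta2 z * Theta2 z) :=
  (hasSum2 hz).mul (hasSum2 hz) (summable_mul_of_summable_norm
    (summable_norm_iff.mpr (summable2 hz)) (summable_norm_iff.mpr (summable2 hz)))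

/-- Identity 1 : Θ₃(z)² + Θ₄(z)² = 2 Θ₃(2z)² -/
lemma id1 : Theta3 z * Theta3 z + Theta4 z * Theta4 z = 2 * (Theta3 (2*z) * Theta3 (2*z)) := by
  have hz2 := im2 hz
  have hL : HasSum (fun p : ℤ × ℤ => t3 z p.1 * t3 z p.2 + t4 z p.1 * t4 z p.2)
      (Theta3 z * Theta3 z + Theta4 z * Theta4 z) := (sum_prod3 hz).add (sum_prod4 hz)
  have hcomp : ((fun p : ℤ × ℤ => t3 z p.1 * t3 z p.2 + t4 z p.1 * t4 z p.2) ∘ g1)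
      = fun p : ℤ × ℤ => 2 * (t3 (2*z) p.1 * t3 (2*z) p.2) := by
    funext p
    simp only [Function.comp_apply, g1, t4]
    have hsgn : ((-1 : ℂ)) ^ (p.1 + p.2) * (-1) ^ (p.1 - p.2) = 1 :=
      neg_one_zpow_mul_even ⟨p.2, by ring⟩
    have hexp : t3 z (p.1 + p.2) * t3 z (p.1 - p.2) = t3 (2*z) p.1 * t3 (2*z) p.2 := by
      rw [t3, t3, t3, t3, ← Complex.exp_add, ← Complex.exp_add]
      congr 1
      push_cast
      ring
    rw [show ((-1 : ℂ) ^ (p.1 + p.2) * t3 z (p.1 + p.2)) * ((-1 : ℂ) ^ (p.1 - p.2) * t3 z (p.1 - p.2))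
        = ((-1 : ℂ) ^ (p.1 + p.2) * (-1) ^ (p.1 - p.2)) * (t3 z (p.1 + p.2) * t3 z (p.1 - p.2)) by ring,
      hsgn, hexp]
    ring
  have hvan : ∀ p ∉ Set.range g1, t3 z p.1 * t3 z p.2 + t4 z p.1 * t4 z p.2 = 0 := by
    intro p hp
    have hodd : Odd (p.1 - p.2) := by
      rcases Int.even_or_odd (p.1 - p.2) with h | h
      · exact absurd (mem_range_g1 h) hp
      · exact h
    rw [t4, t4, show ((-1 : ℂ) ^ p.1 * t3 z p.1) * ((-1 : ℂ) ^ p.2 * t3 z p.2)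
        = ((-1 : ℂ) ^ p.1 * (-1) ^ p.2) * (t3 z p.1 * t3 z p.2) by ring,
      neg_one_zpow_mul_odd hodd]
    ring
  have hR : HasSum ((fun p : ℤ × ℤ => t3 z p.1 * t3 z p.2 + t4 z p.1 * t4 z p.2) ∘ g1)
      (2 * (Theta3 (2*z) * Theta3 (2*z))) := by
    rw [hcomp]; exact (sum_prod3 hz2).mul_left 2
  exact hL.unique ((g1_inj.hasSum_iff hvan).mp hR)

/-- Identity 2 : Θ₃(z)² - Θ₄(z)² = 2 Θ₂(2z)² -/
lemma id2 : Theta3 z * Theta3 z - Theta4 z * Theta4 z = 2 * (Theta2 (2*z) * Theta2 (2*z)) := by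
  have hz2 := im2 hz
  have hL : HasSum (fun p : ℤ × ℤ => t3 z p.1 * t3 z p.2 - t4 z p.1 * t4 z p.2)
      (Theta3 z * Theta3 z - Theta4 z * Theta4 z) := (sum_prod3 hz).sub (sum_prod4 hz)
  have hcomp : ((fun p : ℤ × ℤ => t3 z p.1 * t3 z p.2 - t4 z p.1 * t4 z p.2) ∘ g2)
      = fun p : ℤ × ℤ => 2 * (t2 (2*z) p.1 * t2 (2*z) p.2) := by
    funext p
    simp only [Function.comp_apply, g2, t4]
    have hsgn : ((-1 : ℂ)) ^ (p.1 + p.2 + 1) * (-1) ^ (p.1 - p.2) = -1 :=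
      neg_one_zpow_mul_odd ⟨p.2, by ring⟩
    have hexp : t3 z (p.1 + p.2 + 1) * t3 z (p.1 - p.2) = t2 (2*z) p.1 * t2 (2*z) p.2 := by
      rw [t3, t3, t2, t2, ← Complex.exp_add, ← Complex.exp_add]
      congr 1
      push_cast
      ring
    rw [show ((-1 : ℂ) ^ (p.1 + p.2 + 1) * t3 z (p.1 + p.2 + 1)) * ((-1 : ℂ) ^ (p.1 - p.2) * t3 z (p.1 - p.2))
        = ((-1 : ℂ) ^ (p.1 + p.2 + 1) * (-1) ^ (p.1 - p.2)) * (t3 z (p.1 + p.2 + 1) * t3 z (p.1 - p.2)) by ring,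
      hsgn, hexp]
    ring
  have hvan : ∀ p ∉ Set.range g2, t3 z p.1 * t3 z p.2 - t4 z p.1 * t4 z p.2 = 0 := by
    intro p hp
    have heven : Even (p.1 - p.2) := by
      rcases Int.even_or_odd (p.1 - p.2) with h | h
      · exact h
      · exact absurd (mem_range_g2 h) hp
    rw [t4, t4, show ((-1 : ℂ) ^ p.1 * t3 z p.1) * ((-1 : ℂ) ^ p.2 * t3 z p.2)
        = ((-1 : ℂ) ^ p.1 * (-1) ^ p.2) * (t3 z p.1 * t3 z p.2) by ring,
      neg_one_zpow_mul_even heven]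
    ring
  have hR : HasSum ((fun p : ℤ × ℤ => t3 z p.1 * t3 z p.2 - t4 z p.1 * t4 z p.2) ∘ g2)
      (2 * (Theta2 (2*z) * Theta2 (2*z))) := by
    rw [hcomp]; exact (sum_prod2 hz2).mul_left 2
  exact hL.unique ((g2_inj.hasSum_iff hvan).mp hR)

/-- Identity 3 : Θ₂(z)² = 2 Θ₂(2z) Θ₃(2z) -/
lemma id3 : Theta2 z * Theta2 z = 2 * (Theta2 (2*z) * Theta3 (2*z)) := by
  have hz2 := im2 hz
  set fE : ℤ × ℤ → ℂ := fun p => if Even (p.1 - p.2) then t2 z p.1 * t2 z p.2 else 0 with hfE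
  set fO : ℤ × ℤ → ℂ := fun p => if Even (p.1 - p.2) then 0 else t2 z p.1 * t2 z p.2 with hfO
  have hE : HasSum fE (Theta2 (2*z) * Theta3 (2*z)) := by
    have hcomp : (fE ∘ g1) = fun p : ℤ × ℤ => t2 (2*z) p.1 * t3 (2*z) p.2 := by
      funext p
      simp only [Function.comp_apply, hfE, g1]
      have hc : Even (p.1 + p.2 - (p.1 - p.2)) := ⟨p.2, by ring⟩
      simp only [hc, ↓reduceIte]
      rw [t2, t2, t2, t3, ← Complex.exp_add, ← Complex.exp_add]
      congr 1
      push_cast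
      ring
    have hvan : ∀ p ∉ Set.range g1, fE p = 0 := by
      intro p hp
      have hodd : ¬ Even (p.1 - p.2) := by
        intro h
        exact hp (mem_range_g1 h)
      simp only [hfE, if_neg hodd]
    have hR : HasSum (fE ∘ g1) (Theta2 (2*z) * Theta3 (2*z)) := by
      rw [hcomp]
      exact (hasSum2 hz2).mul (hasSum3 hz2) (summable_mul_of_summable_norm
        (summable_norm_iff.mpr (summable2 hz2)) (summable_norm_iff.mpr (summable3 hz2)))
    exact (g1_inj.hasSum_iff hvan).mp hR
  have hO : HasSum fO (Theta3 (2*z) * Theta2 (2*z)) := by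
    have hcomp : (fO ∘ g4) = fun p : ℤ × ℤ => t3 (2*z) p.1 * t2 (2*z) p.2 := by
      funext p
      simp only [Function.comp_apply, hfO, g4]
      have hc : ¬ Even (p.1 + p.2 - (p.1 - p.2 - 1)) := by
        intro h
        obtain ⟨k, hk⟩ := h
        omega
      simp only [hc, ↓reduceIte]
      rw [t2, t2, t3, t2, ← Complex.exp_add, ← Complex.exp_add]
      congr 1
      push_cast
      ring
    have hvan : ∀ p ∉ Set.range g4, fO p = 0 := by
      intro p hp
      have heven : Even (p.1 - p.2) := by
        rcases Int.even_or_odd (p.1 - p.2) with h | h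
        · exact h
        · exact absurd (mem_range_g4 h) hp
      simp only [hfO, if_pos heven]
    have hR : HasSum (fO ∘ g4) (Theta3 (2*z) * Theta2 (2*z)) := by
      rw [hcomp]
      exact (hasSum3 hz2).mul (hasSum2 hz2) (summable_mul_of_summable_norm
        (summable_norm_iff.mpr (summable3 hz2)) (summable_norm_iff.mpr (summable2 hz2)))
    exact (g4_inj.hasSum_iff hvan).mp hR
  have hsum : HasSum (fun p : ℤ × ℤ => fE p + fO p)
      (Theta2 (2*z) * Theta3 (2*z) + Theta3 (2*z) * Theta2 (2*z)) := hE.add hO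
  have hfun : (fun p : ℤ × ℤ => fE p + fO p) = fun p : ℤ × ℤ => t2 z p.1 * t2 z p.2 := by
    funext p
    simp only [hfE, hfO]
    split_ifs <;> ring
  rw [hfun] at hsum
  have := (sum_prod2 hz).unique hsum
  rw [this]
  ring

end main

end Stmt14Aux

/-- Jacobi's identity: `Θ₂(z)⁴ + Θ₄(z)⁴ = Θ₃(z)⁴` on the upper half-plane. -/
theorem stmt14 : ∀ z : ℂ, 0 < z.im → Theta2 z ^ 4 + Theta4 z ^ 4 = Theta3 z ^ 4 := by
  intro z hz
  have e1 := Stmt14Aux.id1 hz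
  have e2 := Stmt14Aux.id2 hz
  have e3 := Stmt14Aux.id3 hz
  linear_combination (Theta2 z * Theta2 z + 2 * Theta2 (2*z) * Theta3 (2*z)) * e3
    - (Theta3 z * Theta3 z - Theta4 z * Theta4 z) * e1
    - 2 * (Theta3 (2*z) * Theta3 (2*z)) * e2
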